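/- Let (X, Σ, λ) be a measure space and let f ∈ L_∞(X, λ) be nonzero. Then f is a left-symmetric point of L_∞(X, λ) if and only if there exists a λ-atom A such that |f(x)| = ‖f‖_∞ for λ-almost every x ∈ A and f(x) = 0 for λ-almost every x ∈ X \ A. -/

import Mathlib

/-!
If `f` is left-symmetric and not a.e. zero on a measurable set `B`, then `|f|` stays essentially
below `‖f‖` off `B`: otherwise `f ⊥ f·1_B`, whereas `f·1_B - t f` is shorter than `f·1_B` for
small `t > 0`. Applied to `B = {|f| ≤ r}` with `r < ‖f‖`, this forces `|f| ∈ {0, ‖f‖}` a.e.;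
applied to subsets of the support of `f`, it shows that the support is an atom.

Conversely, measurable functions are a.e. constant on an atom `A`. If `f = α` on `A`, `f = 0`
off `A` and `f ⊥ g` with `g = β` on `A`, then `β = 0`, since otherwise `c = -tα/β` shortens `f`
for small `t > 0`; as `g + c f = g` off `A`, this gives `g ⊥ f`.
-/

open MeasureTheory

/-- A `μ`-atom: a set of positive measure all of whose measurable subsets are either
null or conull in it. -/
def IsMeasAtom {X : Type*} [MeasurableSpace X] (μ : Measure X) (A : Set X) : Prop :=
  MeasurableSet A ∧ 0 < μ A ∧
    ∀ B : Set X, B ⊆ A → MeasurableSet B → μ B = 0 ∨ μ (A \ B) = 0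

open Set Filter Topology

section BirkhoffJames

variable (𝕜 : Type*) {E : Type*} [Norm E] [Add E] [SMul 𝕜 E]

def BirkhoffJamesOrthogonal (x y : E) : Prop :=
  ∀ c : 𝕜, ‖x‖ ≤ ‖x + c • y‖

def IsLeftSymmetric (x : E) : Prop :=
  ∀ y : E, BirkhoffJamesOrthogonal 𝕜 x y → BirkhoffJamesOrthogonal 𝕜 y x

variable {𝕜}

theorem not_birkhoffJamesOrthogonal_of_forall_le_max {x y : E} (hx : 0 < ‖x‖) (K : ℝ)
    (h : ∀ t ∈ Ioo (0 : ℝ) 1, ∃ c : 𝕜, ‖x + c • y‖ ≤ max ((1 - t) * ‖x‖) (t * K)) :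
    ¬ BirkhoffJamesOrthogonal 𝕜 x y := by
  have hsmall : ∀ᶠ t in 𝓝[>] (0 : ℝ), t ∈ Ioo 0 1 ∧ t * K < ‖x‖ := by
    refine (show ∀ᶠ t in 𝓝[>] (0 : ℝ), t ∈ Ioo 0 1 from Ioo_mem_nhdsGT one_pos).and
      (nhdsWithin_le_nhds ?_)
    have : Tendsto (fun t : ℝ => t * K) (𝓝 0) (𝓝 (0 * K)) := tendsto_id.mul_const K
    exact this.eventually (gt_mem_nhds (by simpa using hx))
  obtain ⟨t, ⟨ht0, ht1⟩, htK⟩ := hsmall.exists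
  obtain ⟨c, hc⟩ := h t ⟨ht0, ht1⟩
  intro horth
  have : max ((1 - t) * ‖x‖) (t * K) < ‖x‖ := max_lt (by nlinarith) htK
  linarith [horth c]

end BirkhoffJames

namespace MeasureTheory.Lp

variable {X E : Type*} [MeasurableSpace X] {μ : Measure X} [NormedAddCommGroup E]

theorem ae_norm_le_norm_top (f : Lp E ⊤ μ) : ∀ᵐ x ∂μ, ‖f x‖ ≤ ‖f‖ := by
  have hne : eLpNormEssSup f μ ≠ ⊤ := by simpa using Lp.eLpNorm_ne_top f
  filter_upwards [ae_le_eLpNormEssSup (f := ⇑f) (μ := μ)] with x hx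
  rw [Lp.norm_def, eLpNorm_exponent_top, ← ENNReal.ofReal_le_iff_le_toReal hne,
    ofReal_norm]
  exact hx

theorem norm_top_le_of_ae_bound {f : Lp E ⊤ μ} {C : ℝ} (hC : 0 ≤ C)
    (h : ∀ᵐ x ∂μ, ‖f x‖ ≤ C) : ‖f‖ ≤ C := by
  rw [Lp.norm_def, eLpNorm_exponent_top]
  exact ENNReal.toReal_le_of_le_ofReal hC (eLpNormEssSup_le_of_ae_bound h)

theorem norm_top_le_max_of_ae_restrict {f : Lp E ⊤ μ} (S : Set X) {a b : ℝ} (ha : 0 ≤ a)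
    (hS : ∀ᵐ x ∂μ.restrict S, ‖f x‖ ≤ a) (hSc : ∀ᵐ x ∂μ.restrict Sᶜ, ‖f x‖ ≤ b) :
    ‖f‖ ≤ max a b :=
  norm_top_le_of_ae_bound (le_max_of_le_left ha) <| ae_of_ae_restrict_of_ae_restrict_compl S
    (hS.mono fun _ hx => hx.trans (le_max_left a b))
    (hSc.mono fun _ hx => hx.trans (le_max_right a b))

theorem coeFn_add_smul {𝕜 : Type*} [NormedRing 𝕜] [Module 𝕜 E] [IsBoundedSMul 𝕜 E] {p}
    [Fact (1 ≤ p)] (f g : Lp E p μ) (c : 𝕜) :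
    ⇑(f + c • g) =ᵐ[μ] fun x => f x + c • g x := by
  filter_upwards [Lp.coeFn_add f (c • g), Lp.coeFn_smul c g] with x hadd hsmul
  rw [hadd, Pi.add_apply, hsmul, Pi.smul_apply]

end MeasureTheory.Lp

namespace IsMeasAtom

variable {X : Type*} [MeasurableSpace X] {μ : Measure X} {A : Set X}

theorem exists_ae_eq_const (hA : IsMeasAtom μ A) {β : Type*} [MeasurableSpace β]
    [MeasurableSpace.CountablySeparated β] [Nonempty β] {φ : X → β} (hφ : Measurable φ) :
    ∃ b, ∀ᵐ x ∂μ.restrict A, φ x = b := by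
  refine exists_eventuallyEq_const_of_forall_separating MeasurableSet fun U hU => ?_
  obtain ⟨hAm, -, hsplit⟩ := hA
  rcases hsplit (A ∩ φ ⁻¹' U) inter_subset_left (hAm.inter (hφ hU)) with h | h
  · right
    rw [ae_restrict_iff' hAm]
    exact (measure_eq_zero_iff_ae_notMem.1 h).mono fun x hx hxA hxU => hx ⟨hxA, hxU⟩
  · left
    rw [ae_restrict_iff' hAm]
    rw [sdiff_self_inter] at h
    exact (measure_eq_zero_iff_ae_notMem.1 h).mono fun x hx hxA =>
      by_contra fun hxU => hx ⟨hxA, hxU⟩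

end IsMeasAtom

section LeftSymmetric

variable {X : Type*} [MeasurableSpace X] {μ : Measure X}
  {𝕜 E : Type*} [RCLike 𝕜] [NormedAddCommGroup E] [NormedSpace 𝕜 E]

theorem norm_add_neg_ofReal_smul_self {t : ℝ} (ht : t ≤ 1) (y : E) :
    ‖y + (-(t : 𝕜)) • y‖ = (1 - t) * ‖y‖ := by
  have : y + (-(t : 𝕜)) • y = ((1 - t : ℝ) : 𝕜) • y := by
    rw [RCLike.ofReal_sub, RCLike.ofReal_one, sub_smul, one_smul, neg_smul, sub_eq_add_neg]
  rw [this, norm_smul, RCLike.norm_ofReal, abs_of_nonneg (sub_nonneg.2 ht)]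

theorem IsLeftSymmetric.exists_ae_norm_le_compl {f : Lp E ⊤ μ} (hf : IsLeftSymmetric 𝕜 f)
    {B : Set X} (hB : MeasurableSet B) (hfB : ¬ ∀ᵐ x ∂μ.restrict B, f x = 0) :
    ∃ r < ‖f‖, ∀ᵐ x ∂μ.restrict Bᶜ, ‖f x‖ ≤ r := by
  by_contra! hcon
  set g : Lp E ⊤ μ := ((Lp.memLp f).indicator hB).toLp (B.indicator f)
  have hg : ⇑g =ᵐ[μ] B.indicator f := MemLp.coeFn_toLp _
  have hgB : ∀ᵐ x ∂μ.restrict B, g x = f x := by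
    filter_upwards [ae_restrict_of_ae hg, ae_restrict_mem hB] with x hx hxB
    rw [hx, indicator_of_mem hxB]
  have hgBc : ∀ᵐ x ∂μ.restrict Bᶜ, g x = 0 := by
    filter_upwards [ae_restrict_of_ae hg, ae_restrict_mem hB.compl] with x hx hxB
    rw [hx, indicator_of_notMem hxB]
  have horth : BirkhoffJamesOrthogonal 𝕜 f g := fun c => by
    by_contra! hlt
    refine hcon _ hlt ?_
    filter_upwards [ae_restrict_of_ae (Lp.coeFn_add_smul f g c), hgBc,
      ae_restrict_of_ae (Lp.ae_norm_le_norm_top (f + c • g))] with x hx hgx hle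
    rw [hx, hgx, smul_zero, add_zero] at hle
    exact hle.not_gt
  have hg0 : 0 < ‖g‖ := norm_pos_iff.2 fun h => hfB <| by
    filter_upwards [hgB, ae_restrict_of_ae (Lp.eq_zero_iff_ae_eq_zero.1 h)] with x hgx hx
    rw [← hgx, hx, Pi.zero_apply]
  refine not_birkhoffJamesOrthogonal_of_forall_le_max hg0 ‖f‖
    (fun t ht => ⟨-(t : 𝕜), ?_⟩) (hf g horth)
  refine Lp.norm_top_le_max_of_ae_restrict B (mul_nonneg (by linarith [ht.2]) hg0.le) ?_ ?_
  · filter_upwards [ae_restrict_of_ae (Lp.coeFn_add_smul g f (-(t : 𝕜))), hgB,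
      ae_restrict_of_ae (Lp.ae_norm_le_norm_top g)] with x hx hgx hle
    rw [hx, ← hgx, norm_add_neg_ofReal_smul_self ht.2.le]
    exact mul_le_mul_of_nonneg_left hle (by linarith [ht.2])
  · filter_upwards [ae_restrict_of_ae (Lp.coeFn_add_smul g f (-(t : 𝕜))), hgBc,
      ae_restrict_of_ae (Lp.ae_norm_le_norm_top f)] with x hx hgx hle
    rw [hx, hgx, zero_add, norm_smul, norm_neg, RCLike.norm_ofReal, abs_of_pos ht.1]
    exact mul_le_mul_of_nonneg_left hle ht.1.le

theorem IsLeftSymmetric.ae_norm_eq_of_ne_zero {f : Lp E ⊤ μ} (hf : IsLeftSymmetric 𝕜 f) :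
    ∀ᵐ x ∂μ, f x ≠ 0 → ‖f x‖ = ‖f‖ := by
  rcases eq_or_ne f 0 with rfl | hf0
  · filter_upwards [Lp.coeFn_zero E ⊤ μ] with x hx hne using absurd hx hne
  obtain ⟨u, -, hu, hlim⟩ := exists_seq_strictMono_tendsto' (norm_pos_iff.2 hf0)
  have hfm : Measurable fun x => ‖f x‖ := (Lp.stronglyMeasurable f).norm.measurable
  have hsmall : ∀ n, ∀ᵐ x ∂μ, ‖f x‖ ≤ u n → f x = 0 := fun n => by
    have hS : MeasurableSet {x | ‖f x‖ ≤ u n} := measurableSet_le hfm measurable_const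
    refine (ae_restrict_iff' hS).1 (by_contra fun hne => ?_)
    obtain ⟨r, hr, hSc⟩ := hf.exists_ae_norm_le_compl hS hne
    exact (max_lt (hu n).2 hr).not_ge
      (Lp.norm_top_le_max_of_ae_restrict _ (hu n).1.le (ae_restrict_mem hS) hSc)
  filter_upwards [ae_all_iff.2 hsmall, Lp.ae_norm_le_norm_top f] with x hx hle hne
  refine hle.antisymm (not_lt.1 fun hlt => ?_)
  obtain ⟨n, hn⟩ := (hlim.eventually (lt_mem_nhds hlt)).exists
  exact hne (hx n hn.le)

theorem IsLeftSymmetric.isMeasAtom_support {f : Lp E ⊤ μ} (hf : IsLeftSymmetric 𝕜 f)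
    (hf0 : f ≠ 0) : IsMeasAtom μ {x | f x ≠ 0} := by
  have hA : MeasurableSet {x | f x ≠ 0} := by
    simpa only [norm_pos_iff] using
      measurableSet_lt (measurable_const (a := (0 : ℝ))) (Lp.stronglyMeasurable f).norm.measurable
  refine ⟨hA, pos_iff_ne_zero.2 fun h => hf0 ?_, fun C hCA hC => ?_⟩
  · rw [Lp.eq_zero_iff_ae_eq_zero]
    filter_upwards [measure_eq_zero_iff_ae_notMem.1 h] with x hx
    exact not_not.1 hx
  by_contra! ⟨hC0, hAC0⟩
  have hfC : ¬ ∀ᵐ x ∂μ.restrict C, f x = 0 := fun h => by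
    have := ae_restrict_neBot.2 hC0
    obtain ⟨x, hx, hxC⟩ := (h.and (ae_restrict_mem hC)).exists
    exact hCA hxC hx
  obtain ⟨r, hr, hCc⟩ := hf.exists_ae_norm_le_compl hC hfC
  have := ae_restrict_neBot.2 hAC0
  obtain ⟨x, hxr, hxAC, hx⟩ :=
    ((ae_restrict_of_ae_restrict_of_subset (fun _ hx => hx.2) hCc).and
      ((ae_restrict_mem (hA.diff hC)).and (ae_restrict_of_ae hf.ae_norm_eq_of_ne_zero))).exists
  exact hr.not_ge ((hx hxAC.1).ge.trans hxr)

theorem IsMeasAtom.ae_eq_zero_of_birkhoffJamesOrthogonal {A : Set X} (hA : IsMeasAtom μ A)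
    {f g : Lp 𝕜 ⊤ μ} (hf0 : f ≠ 0) (hfA : ∀ᵐ x ∂μ.restrict A, ‖f x‖ = ‖f‖)
    (hfAc : ∀ᵐ x ∂μ.restrict Aᶜ, f x = 0) (horth : BirkhoffJamesOrthogonal 𝕜 f g) :
    ∀ᵐ x ∂μ.restrict A, g x = 0 := by
  obtain ⟨α, hα⟩ := hA.exists_ae_eq_const (Lp.stronglyMeasurable f).measurable
  obtain ⟨β, hβ⟩ := hA.exists_ae_eq_const (Lp.stronglyMeasurable g).measurable
  suffices hβ0 : β = 0 from hβ.mono fun x hx => hx.trans hβ0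
  by_contra hβ0
  refine not_birkhoffJamesOrthogonal_of_forall_le_max (norm_pos_iff.2 hf0) (‖α‖ * ‖g‖ / ‖β‖)
    (fun t ht => ⟨-(t : 𝕜) * α / β, ?_⟩) horth
  refine Lp.norm_top_le_max_of_ae_restrict A
    (mul_nonneg (by linarith [ht.2]) (norm_nonneg f)) ?_ ?_
  · filter_upwards [ae_restrict_of_ae (Lp.coeFn_add_smul f g (-(t : 𝕜) * α / β)), hα, hβ, hfA]
      with x hx hfx hgx hnorm
    have := norm_add_neg_ofReal_smul_self (𝕜 := 𝕜) ht.2.le (f x)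
    rw [smul_eq_mul, hfx] at this
    rw [hx, hgx, hfx, smul_eq_mul, div_mul_cancel₀ _ hβ0, this, ← hfx, hnorm]
  · filter_upwards [ae_restrict_of_ae (Lp.coeFn_add_smul f g (-(t : 𝕜) * α / β)), hfAc,
      ae_restrict_of_ae (Lp.ae_norm_le_norm_top g)] with x hx hfx hle
    rw [hx, hfx, zero_add, norm_smul, norm_div, norm_mul, norm_neg, RCLike.norm_ofReal,
      abs_of_pos ht.1]
    calc t * ‖α‖ / ‖β‖ * ‖g x‖ ≤ t * ‖α‖ / ‖β‖ * ‖g‖ :=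
          mul_le_mul_of_nonneg_left hle (by have := ht.1; positivity)
      _ = t * (‖α‖ * ‖g‖ / ‖β‖) := by ring

theorem IsMeasAtom.isLeftSymmetric {A : Set X} (hA : IsMeasAtom μ A) {f : Lp 𝕜 ⊤ μ}
    (hf0 : f ≠ 0) (hfA : ∀ᵐ x ∂μ.restrict A, ‖f x‖ = ‖f‖)
    (hfAc : ∀ᵐ x ∂μ.restrict Aᶜ, f x = 0) : IsLeftSymmetric 𝕜 f := fun g horth c => by
  have hgA := hA.ae_eq_zero_of_birkhoffJamesOrthogonal hf0 hfA hfAc horth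
  refine (Lp.norm_top_le_max_of_ae_restrict A (norm_nonneg (g + c • f)) ?_ ?_).trans_eq
    (max_self _)
  · filter_upwards [hgA] with x hx
    rw [hx, norm_zero]
    exact norm_nonneg _
  · filter_upwards [ae_restrict_of_ae (Lp.coeFn_add_smul g f c), hfAc,
      ae_restrict_of_ae (Lp.ae_norm_le_norm_top (g + c • f))] with x hx hfx hle
    rwa [hx, hfx, smul_zero, add_zero] at hle

end LeftSymmetric

/-- **Left-symmetric points of `L_∞`.** A nonzero `f ∈ L_∞(X, μ)` is left-symmetric for
Birkhoff-James orthogonality iff there is a `μ`-atom `A` with `|f| = ‖f‖_∞` a.e. on `A`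
and `f = 0` a.e. on `X \ A`. -/
theorem left_symmetric_points_Linfty (X : Type*) [MeasurableSpace X] (μ : Measure X)
    (f : Lp ℂ ⊤ μ) (hf : f ≠ 0) :
    (∀ g : Lp ℂ ⊤ μ, (∀ c : ℂ, ‖f‖ ≤ ‖f + c • g‖) → (∀ c : ℂ, ‖g‖ ≤ ‖g + c • f‖)) ↔
      ∃ A : Set X, IsMeasAtom μ A ∧
        (∀ᵐ x ∂μ.restrict A, ‖f x‖ = ‖f‖) ∧
        (∀ᵐ x ∂μ.restrict Aᶜ, f x = 0) := by
  change IsLeftSymmetric ℂ f ↔ _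
  refine ⟨fun hLS => ?_, fun ⟨A, hA, hfA, hfAc⟩ => hA.isLeftSymmetric hf hfA hfAc⟩
  have hA := hLS.isMeasAtom_support hf
  refine ⟨_, hA, ?_, ?_⟩
  · filter_upwards [ae_restrict_of_ae hLS.ae_norm_eq_of_ne_zero, ae_restrict_mem hA.1]
      with x hnorm hx using hnorm hx
  · filter_upwards [ae_restrict_mem hA.1.compl] with x hx using not_not.1 hx
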